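/- Let n ≥ 4 be an even integer and q a nonzero complex number. At every critical point p of W_0 one has W_0(p) = n·z_2(p). Moreover, if p ∈ V(I_1) then W_0(p)^n = 4 n^n q, and if p ∈ V(I_2) then W_0(p) = 0. -/

import Mathlib

open Finset

/-- One-based access to the coordinates of a point `z ∈ ℂⁿ`: `zc n z j = z_j` for
`1 ≤ j ≤ n` (and `0` for out-of-range indices, which are never used). -/
noncomputable def zc (n : ℕ) (z : Fin n → ℂ) (j : ℕ) : ℂ :=
  if h : 1 ≤ j ∧ j ≤ n then z ⟨j - 1, by omega⟩ else 0

/-- The mirror Landau–Ginzburg potential of the quadric `Qⁿ`: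
`W₀(z) = q z₁² z_n/(z₁⋯z_n − 1) + z₂ + ∑_{i=2}^{n−1} z_i z_{i+1}`,
defined on `Zⁿ = {z ∈ ℂⁿ : z₁⋯z_n ≠ 1}`. -/
noncomputable def W0 (n : ℕ) (q : ℂ) (z : Fin n → ℂ) : ℂ :=
  q * (zc n z 1) ^ 2 * zc n z n / ((∏ j, z j) - 1)
    + zc n z 2 + ∑ i ∈ Finset.Icc 2 (n - 1), zc n z i * zc n z (i + 1)

/-- `z` is a critical point of `W₀` in `Zⁿ`: `z₁⋯z_n ≠ 1` and all `n` partial derivatives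
`∂W₀/∂z_j` vanish at `z`. -/
def IsCritPt (n : ℕ) (q : ℂ) (z : Fin n → ℂ) : Prop :=
  (∏ j, z j) ≠ 1 ∧
    ∀ j : Fin n, deriv (fun t => W0 n q (Function.update z j t)) (z j) = 0

/-- Membership in `V(I₁)`: `z_{2i+1} = 1` for `1 ≤ i ≤ n/2−1`, `z_{2i} = z_n` for
`1 ≤ i ≤ n/2`, `q z₁² = 1`, and `z₁ z_n^{n/2} = 2`. -/
def MemV1 (n : ℕ) (q : ℂ) (z : Fin n → ℂ) : Prop :=
  (∀ i : ℕ, 1 ≤ i → i ≤ n / 2 - 1 → zc n z (2 * i + 1) = 1) ∧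
    (∀ i : ℕ, 1 ≤ i → i ≤ n / 2 → zc n z (2 * i) = zc n z n) ∧
    q * (zc n z 1) ^ 2 = 1 ∧ zc n z 1 * (zc n z n) ^ (n / 2) = 2

/-- Membership in `V(I₂)`: `z_{2i+1} = (−1)^i` for `1 ≤ i ≤ n/2−1`, `z_{2i} = 0` for
`1 ≤ i ≤ n/2`, and `q z₁² = (−1)^{(n−2)/2}`. -/
def MemV2 (n : ℕ) (q : ℂ) (z : Fin n → ℂ) : Prop :=
  (∀ i : ℕ, 1 ≤ i → i ≤ n / 2 - 1 → zc n z (2 * i + 1) = (-1 : ℂ) ^ i) ∧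
    (∀ i : ℕ, 1 ≤ i → i ≤ n / 2 → zc n z (2 * i) = 0) ∧
    q * (zc n z 1) ^ 2 = (-1 : ℂ) ^ ((n - 2) / 2)

/-!
Put `A = q z₁² z_n`, `P = z₁⋯z_n`, `D = P − 1`, and call `b₁ = z₂`, `b_i = z_i z_{i+1}`
(`2 ≤ i ≤ n − 1`) the bonds, so that `W₀ = A/D + ∑_{i=1}^{n−1} b_i`. Multiplying
`∂W₀/∂z_k = 0` by `z_k D²` gives `A(P − 2) = 0` for `k = 1`, `(b_{k−1} + b_k) D² = AP` for
`2 ≤ k ≤ n − 1` and `b_{n−1} D² = A` for `k = n`. Consecutive bonds therefore add up to the same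
constant, so for even `n` we get `b_{n−1} = b₁`, i.e. `z₂ D² = A`, while the first `n − 2` bonds
pair off. Hence `W₀ D² = AD + (n/2 − 1)AP + A = nA = n z₂ D²`, using `AP = 2A`.
-/

theorem sum_Ico_eq_nsmul_of_add_succ_eq {M : Type*} [AddCommMonoid M] (g : ℕ → M) (c : M)
    (a m : ℕ) (hg : ∀ i, a ≤ i → i + 1 < a + 2 * m → g i + g (i + 1) = c) :
    ∑ i ∈ Ico a (a + 2 * m), g i = m • c := by
  induction m with
  | zero => simp
  | succ m ih =>
    rw [show a + 2 * (m + 1) = a + 2 * m + 1 + 1 by ring,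
      sum_Ico_succ_top (by omega), sum_Ico_succ_top (by omega),
      ih fun i hi hlt => hg i hi (by omega), add_assoc, hg (a + 2 * m) (by omega) (by omega),
      succ_nsmul]

theorem apply_add_two_mul_eq_of_add_succ_eq {M : Type*} [AddCancelCommMonoid M] (g : ℕ → M)
    (c : M) (a m : ℕ) (hg : ∀ i, a ≤ i → i + 1 ≤ a + 2 * m → g i + g (i + 1) = c) :
    g (a + 2 * m) = g a := by
  induction m with
  | zero => rfl
  | succ m ih =>
    rw [← ih fun i hi hlt => hg i hi (by omega)]
    apply add_left_cancel (a := g (a + 2 * m + 1))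
    rw [show a + 2 * (m + 1) = a + 2 * m + 1 + 1 by ring, hg (a + 2 * m + 1) (by omega) (by omega),
      add_comm, hg (a + 2 * m) (by omega) (by omega)]

theorem hasDerivAt_prod_update {ι 𝕜 : Type*} [Fintype ι] [DecidableEq ι]
    [NontriviallyNormedField 𝕜] (z : ι → 𝕜) (j : ι) (t : 𝕜) :
    HasDerivAt (fun s => ∏ i, Function.update z j s i) (∏ i ∈ univ.erase j, z i) t := by
  simp_rw [prod_update_of_mem (mem_univ j), sdiff_singleton_eq_erase]
  simpa using (hasDerivAt_id t).mul_const (∏ i ∈ univ.erase j, z i)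

variable {n : ℕ}

theorem zc_succ (z : Fin n → ℂ) (j : Fin n) : zc n z (j + 1) = z j :=
  dif_pos ⟨by omega, j.isLt⟩

theorem zc_update (z : Fin n → ℂ) (j : Fin n) (t : ℂ) (m : ℕ) :
    zc n (Function.update z j t) m = if m = j + 1 then t else zc n z m := by
  unfold zc
  have := j.isLt
  split_ifs <;> first | omega | simp [Function.update_apply, Fin.ext_iff] <;> omega

theorem hasDerivAt_zc_update (z : Fin n → ℂ) (j : Fin n) (m : ℕ) (t : ℂ) :
    HasDerivAt (fun s => zc n (Function.update z j s) m) (if m = j + 1 then 1 else 0) t := by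
  simp_rw [zc_update]
  split_ifs
  exacts [hasDerivAt_id t, hasDerivAt_const t _]

theorem sum_Icc_ite_mul_add_mul_ite {R : Type*} [Semiring R] (x : ℕ → R) (k a b : ℕ) :
    ∑ i ∈ Icc a b,
        ((if i = k + 1 then 1 else 0) * x (i + 1) + x i * (if i + 1 = k + 1 then 1 else 0))
      = (if k + 1 ∈ Icc a b then x (k + 2) else 0) + (if k ∈ Icc a b then x k else 0) := by
  simp only [sum_add_distrib, ite_mul, mul_ite, one_mul, mul_one, zero_mul, mul_zero,
    add_left_inj, sum_ite_eq']

variable {q : ℂ} {z : Fin n → ℂ}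

/-- `z_j · ∂W₀/∂z_j · (z₁⋯z_n − 1)² = 0`, written out. -/
theorem IsCritPt.euler (hz : IsCritPt n q z) (j : Fin n) :
    ((2 * (if 1 = (j : ℕ) + 1 then 1 else 0) * zc n z 1 * zc n z n
        + (if n = (j : ℕ) + 1 then 1 else 0) * zc n z 1 ^ 2) * q * (∏ i, z i - 1)
      + ((if 2 = (j : ℕ) + 1 then 1 else 0)
        + (if (j : ℕ) + 1 ∈ Icc 2 (n - 1) then zc n z (j + 2) else 0)
        + (if (j : ℕ) ∈ Icc 2 (n - 1) then zc n z j else 0)) * (∏ i, z i - 1) ^ 2) * z j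
      = q * zc n z 1 ^ 2 * zc n z n * ∏ i, z i := by
  obtain ⟨hP, hcrit⟩ := hz
  have hD : ∏ i, z i - 1 ≠ 0 := sub_ne_zero.mpr hP
  have hx := hasDerivAt_zc_update z j
  have hW : HasDerivAt (fun t => W0 n q (Function.update z j t)) _ (z j) :=
    (((((hx 1 _).pow 2).const_mul q).mul (hx n _)).fun_div
      ((hasDerivAt_prod_update z j _).sub_const 1) (by simpa using hD)).fun_add (hx 2 _)
      |>.fun_add (HasDerivAt.fun_sum fun i _ => (hx i _).mul (hx (i + 1) _))
  have h := hW.deriv ▸ hcrit j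
  simp only [Function.update_eq_self, Pi.pow_apply, Pi.mul_apply, sum_Icc_ite_mul_add_mul_ite] at h
  field_simp at h
  linear_combination z j * h + q * zc n z 1 ^ 2 * zc n z n * mul_prod_erase univ z (mem_univ j)

noncomputable def bond (n : ℕ) (z : Fin n → ℂ) (i : ℕ) : ℂ :=
  if i = 1 then zc n z 2 else zc n z i * zc n z (i + 1)

theorem W0_eq_add_sum_bond (hn : 2 ≤ n) :
    W0 n q z = q * zc n z 1 ^ 2 * zc n z n / (∏ i, z i - 1) + ∑ i ∈ Ico 1 n, bond n z i := by
  have hIcc : Icc 2 (n - 1) = Ico 2 n := by ext; simp only [mem_Icc, mem_Ico]; omega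
  rw [W0, add_assoc, sum_eq_sum_Ico_succ_bot (by omega : 1 < n), hIcc, bond, if_pos rfl]
  congr 2
  exact sum_congr rfl fun i hi => by rw [bond, if_neg (by simp only [mem_Ico] at hi; omega)]

namespace IsCritPt

variable (hz : IsCritPt n q z)
include hz

theorem mul_prod_sub_two (hn : 2 ≤ n) :
    q * zc n z 1 ^ 2 * zc n z n * (∏ i, z i - 2) = 0 := by
  have h := hz.euler ⟨0, by omega⟩
  rw [← zc_succ z] at h
  simp only [mem_Icc] at h
  split_ifs at h <;> first | omega | linear_combination h

theorem bond_add_bond {i : ℕ} (hi : 1 ≤ i) (hin : i + 2 ≤ n) :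
    (bond n z i + bond n z (i + 1)) * (∏ j, z j - 1) ^ 2
      = q * zc n z 1 ^ 2 * zc n z n * ∏ j, z j := by
  have h := hz.euler ⟨i, by omega⟩
  rw [← zc_succ z] at h
  simp only [mem_Icc] at h
  unfold bond
  obtain rfl | hi := eq_or_lt_of_le hi
  all_goals split_ifs at h ⊢ <;> first | omega | linear_combination h

theorem bond_last (hn : 3 ≤ n) :
    bond n z (n - 1) * (∏ j, z j - 1) ^ 2 = q * zc n z 1 ^ 2 * zc n z n := by
  have h := hz.euler ⟨n - 1, by omega⟩
  rw [← zc_succ z] at h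
  simp only [mem_Icc, Nat.sub_add_cancel (show 1 ≤ n by omega)] at h
  rw [bond, Nat.sub_add_cancel (by omega)]
  split_ifs at h ⊢ <;> first | omega | linear_combination h

theorem zc_two_mul_sq (hn : 3 ≤ n) (hev : Even n) :
    zc n z 2 * (∏ i, z i - 1) ^ 2 = q * zc n z 1 ^ 2 * zc n z n := by
  have h := apply_add_two_mul_eq_of_add_succ_eq (fun i => bond n z i * (∏ i, z i - 1) ^ 2) _ 1
    (n / 2 - 1) fun i hi hin => by rw [← add_mul]; exact hz.bond_add_bond hi (by omega)
  rw [show 1 + 2 * (n / 2 - 1) = n - 1 by have := Nat.two_mul_div_two_of_even hev; omega,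
    hz.bond_last hn, bond, if_pos rfl] at h
  exact h.symm

theorem sum_bond_mul_sq (hn : 3 ≤ n) (hev : Even n) :
    (∑ i ∈ Ico 1 n, bond n z i) * (∏ i, z i - 1) ^ 2
      = ((n / 2 - 1 : ℕ) : ℂ) * (q * zc n z 1 ^ 2 * zc n z n * ∏ i, z i)
        + q * zc n z 1 ^ 2 * zc n z n := by
  have h := sum_Ico_eq_nsmul_of_add_succ_eq (fun i => bond n z i * (∏ i, z i - 1) ^ 2) _ 1
    (n / 2 - 1) fun i hi hin => by rw [← add_mul]; exact hz.bond_add_bond hi (by omega)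
  rw [show 1 + 2 * (n / 2 - 1) = n - 1 by have := Nat.two_mul_div_two_of_even hev; omega,
    nsmul_eq_mul] at h
  have hIco : Ico 1 n = Ico 1 (n - 1 + 1) := by rw [Nat.sub_add_cancel (by omega)]
  rw [hIco, sum_Ico_succ_top (by omega), add_mul, sum_mul, h, hz.bond_last hn]

theorem W0_eq (hn : 3 ≤ n) (hev : Even n) : W0 n q z = n * zc n z 2 := by
  have hD : ∏ i, z i - 1 ≠ 0 := sub_ne_zero.mpr hz.1
  have hn2 : (n : ℂ) = 2 * ((n / 2 - 1 : ℕ) : ℂ) + 2 := by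
    have := Nat.two_mul_div_two_of_even hev; norm_cast; omega
  apply mul_right_cancel₀ (pow_ne_zero 2 hD)
  rw [W0_eq_add_sum_bond (by omega), add_mul, hz.sum_bond_mul_sq hn hev]
  field_simp
  linear_combination (↑(n / 2 - 1) + 1 : ℂ) * hz.mul_prod_sub_two (by omega)
    - q * zc n z 1 ^ 2 * zc n z n * hn2 - n * hz.zc_two_mul_sq hn hev

end IsCritPt

theorem quadric_mirror_critical_values_general (n : ℕ) (hn : 4 ≤ n) (hev : Even n)
    (q : ℂ) (z : Fin n → ℂ) (hz : IsCritPt n q z) :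
    W0 n q z = n * zc n z 2 ∧
    (MemV1 n q z → (W0 n q z) ^ n = 4 * (n : ℂ) ^ n * q) ∧
    (MemV2 n q z → W0 n q z = 0) := by
  have hW := hz.W0_eq (by omega) hev
  refine ⟨hW, ?_, ?_⟩
  · rintro ⟨-, hz2, hq1, hz1⟩
    have hzn : zc n z n ^ n = 4 * q := by
      have h := congrArg (q * · ^ 2) hz1
      rw [mul_pow, ← pow_mul, mul_comm _ 2, Nat.two_mul_div_two_of_even hev] at h
      linear_combination h - zc n z n ^ n * hq1
    rw [hW, mul_pow, hz2 1 le_rfl (by omega), hzn]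
    ring
  · rintro ⟨-, hz2, -⟩
    rw [hW, hz2 1 le_rfl (by omega), mul_zero]

/-- **Critical values of the mirror LG potential of the quadric.**
For even `n ≥ 4`, `q ≠ 0`, and every critical point `p` of `W₀`: `W₀(p) = n·z₂(p)`;
if `p ∈ V(I₁)` then `W₀(p)ⁿ = 4 nⁿ q`; and if `p ∈ V(I₂)` then `W₀(p) = 0`. -/
theorem quadric_mirror_critical_values (n : ℕ) (hn : 4 ≤ n) (hev : Even n)
    (q : ℂ) (hq : q ≠ 0) (z : Fin n → ℂ) (hz : IsCritPt n q z) :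
    W0 n q z = n * zc n z 2 ∧
    (MemV1 n q z → (W0 n q z) ^ n = 4 * (n : ℂ) ^ n * q) ∧
    (MemV2 n q z → W0 n q z = 0) :=
  quadric_mirror_critical_values_general n hn hev q z hz
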